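/- For all integers k ≥ 0 and a ≥ 0, in K[B] one has B_odd^{(2k+1)} · B_odd^{(2a)} = [2k+2a+1 choose 2k+1] · ( B_odd^{(2k+2a+1)} + Σ_{ℓ=1}^{k} ( ∏_{m=1}^{ℓ} [2a−2m+2]·[2k−2m+2] / ( [2k+2a−2m+3]·[2m] ) ) · (qς)^{ℓ} · B_odd^{(2k+2a−2ℓ+1)} ). -/

import Mathlib

noncomputable section

open Polynomial Finset

abbrev Kq : Type := RatFunc ℚ

/-- The variable `q` in `ℚ(q)`. -/
def qq : Kq := RatFunc.X

/-- The quantum integer `[n] = (q^n - q^{-n})/(q - q^{-1})` for `n : ℤ`. -/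
def qint (n : ℤ) : Kq := (qq ^ n - qq ^ (-n)) / (qq - qq⁻¹)

/-- The quantum factorial `[n]! = ∏_{i=1}^n [i]`. -/
def qfact (n : ℕ) : Kq := ∏ i ∈ Finset.range n, qint ((i : ℤ) + 1)

/-- The quantum binomial `[n choose m] = [n]!/([m]!·[n-m]!)`. -/
def qbinom (n m : ℕ) : Kq := qfact n / (qfact m * qfact (n - m))

/-- The even ı-divided power `B_ev^{(n)}` in `K[B]`. -/
def BevP (ς : Kq) (n : ℕ) : Polynomial Kq :=
  if Even n then
    Polynomial.C (qfact n)⁻¹ *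
      ∏ j ∈ Finset.range (n / 2),
        ((Polynomial.X : Polynomial Kq) ^ 2 - Polynomial.C (qq * ς * (qint (2 * (j : ℤ))) ^ 2))
  else
    Polynomial.C (qfact n)⁻¹ *
      (Polynomial.X *
        ∏ j ∈ Finset.range (n / 2),
          ((Polynomial.X : Polynomial Kq) ^ 2 - Polynomial.C (qq * ς * (qint (2 * (j : ℤ) + 2)) ^ 2)))

/-- The odd ı-divided power `B_odd^{(n)}` in `K[B]`. -/
def BoddP (ς : Kq) (n : ℕ) : Polynomial Kq :=
  if Even n then
    Polynomial.C (qfact n)⁻¹ *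
      ∏ j ∈ Finset.range (n / 2),
        ((Polynomial.X : Polynomial Kq) ^ 2 - Polynomial.C (qq * ς * (qint (2 * (j : ℤ) + 1)) ^ 2))
  else
    Polynomial.C (qfact n)⁻¹ *
      (Polynomial.X *
        ∏ j ∈ Finset.range (n / 2),
          ((Polynomial.X : Polynomial Kq) ^ 2 - Polynomial.C (qq * ς * (qint (2 * (j : ℤ) + 1)) ^ 2)))

lemma qq_ne_zero : qq ≠ 0 := RatFunc.X_ne_zero

lemma qq_npow_ne_one (m : ℕ) (hm : m ≠ 0) : qq ^ (m:ℕ) ≠ 1 := by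
  have heq : (RatFunc.X : Kq) ^ m = algebraMap (Polynomial ℚ) Kq (Polynomial.X ^ m) := by
    simp [RatFunc.algebraMap_X]
  rw [show qq = RatFunc.X from rfl, heq]
  intro h
  have h1 : algebraMap (Polynomial ℚ) Kq (Polynomial.X ^ m) = algebraMap (Polynomial ℚ) Kq 1 := by
    simpa using h
  have h2 := RatFunc.algebraMap_injective ℚ h1
  have h3 := congrArg Polynomial.natDegree h2
  simp [Polynomial.natDegree_X_pow] at h3
  exact hm h3

lemma qq_zpow_ne_one (m : ℤ) (hm : m ≠ 0) : qq ^ m ≠ 1 := by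
  rcases lt_trichotomy m 0 with h | h | h
  · intro he
    have hne : qq ^ (-m) ≠ 1 := by
      have h0 : (-m).toNat ≠ 0 := by omega
      have := qq_npow_ne_one (-m).toNat h0
      rwa [← zpow_natCast, Int.toNat_of_nonneg (by omega)] at this
    apply hne
    have : (qq ^ m)⁻¹ = 1 := by rw [he]; simp
    rwa [← zpow_neg] at this
  · omega
  · have h0 : m.toNat ≠ 0 := by omega
    have := qq_npow_ne_one m.toNat h0
    rwa [← zpow_natCast, Int.toNat_of_nonneg (by omega)] at this

lemma hq_sub : qq - qq⁻¹ ≠ 0 := by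
  intro h
  have h1 := sub_eq_zero.mp h
  have h2 : qq ^ (2:ℤ) = 1 := by
    rw [show (2:ℤ) = (1:ℤ)+1 by ring, zpow_add₀ qq_ne_zero, zpow_one]
    nth_rewrite 1 [h1]
    exact inv_mul_cancel₀ qq_ne_zero
  exact qq_zpow_ne_one 2 (by norm_num) h2

lemma qint_ne_zero {n : ℤ} (hn : n ≠ 0) : qint n ≠ 0 := by
  unfold qint
  apply div_ne_zero _ hq_sub
  intro h
  have h1 : qq ^ n = qq ^ (-n) := sub_eq_zero.mp h
  have h2 : qq ^ (2*n) = 1 := by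
    have h3 := congrArg (· * qq ^ n) h1
    beta_reduce at h3
    rw [← zpow_add₀ qq_ne_zero, ← zpow_add₀ qq_ne_zero] at h3
    simpa [two_mul] using h3
  exact qq_zpow_ne_one (2*n) (by omega) h2

lemma qint_zero : qint 0 = 0 := by simp [qint]

/-- key q-identity: [x][y] = [x-t][y-t] + [t][x+y-t] -/
lemma qint_key (x y t : ℤ) :
    qint x * qint y = qint (x - t) * qint (y - t) + qint t * qint (x + y - t) := by
  unfold qint
  rw [div_mul_div_comm, div_mul_div_comm, div_mul_div_comm, ← add_div]
  congr 1
  have hq := qq_ne_zero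
  have ht : qq ^ t * qq ^ (-t) = 1 := by rw [← zpow_add₀ hq]; simp
  have e1 : qq ^ (x - t) = qq ^ x * qq ^ (-t) := by
    rw [← zpow_add₀ hq]; ring_nf
  have e2 : qq ^ (-(x - t)) = qq ^ (-x) * qq ^ t := by
    rw [← zpow_add₀ hq]; ring_nf
  have e3 : qq ^ (y - t) = qq ^ y * qq ^ (-t) := by
    rw [← zpow_add₀ hq]; ring_nf
  have e4 : qq ^ (-(y - t)) = qq ^ (-y) * qq ^ t := by
    rw [← zpow_add₀ hq]; ring_nf
  have e5 : qq ^ (x + y - t) = qq ^ x * qq ^ y * qq ^ (-t) := by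
    rw [← zpow_add₀ hq, ← zpow_add₀ hq]; ring_nf
  have e6 : qq ^ (-(x + y - t)) = qq ^ (-x) * qq ^ (-y) * qq ^ t := by
    rw [← zpow_add₀ hq, ← zpow_add₀ hq]; ring_nf
  rw [e1, e2, e3, e4, e5, e6]
  linear_combination (-(qq ^ x * qq ^ y - qq ^ x * qq ^ (-y) - qq ^ (-x) * qq ^ y
    + qq ^ (-x) * qq ^ (-y))) * ht

lemma qfact_succ (n : ℕ) : qfact (n+1) = qfact n * qint ((n:ℤ)+1) := by
  unfold qfact
  rw [Finset.prod_range_succ]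

lemma qfact_ne_zero (n : ℕ) : qfact n ≠ 0 := by
  unfold qfact
  apply Finset.prod_ne_zero_iff.mpr
  intro i _
  exact qint_ne_zero (by omega)

/-- the polynomial ∏_{j<n} (X² - qς[2j+1]²) -/
def Fp (ς : Kq) (n : ℕ) : Polynomial Kq :=
  ∏ j ∈ Finset.range n,
    ((Polynomial.X : Polynomial Kq) ^ 2 - Polynomial.C (qq * ς * (qint (2 * (j : ℤ) + 1)) ^ 2))

/-- coefficient in the key expansion -/
def g (ς : Kq) (k a ℓ : ℕ) : Kq :=
  (qq * ς) ^ ℓ *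
    (∏ i ∈ Finset.range ℓ, qint (2*(a:ℤ) - 2*(i:ℤ)) / qint (2*(i:ℤ)+2)) *
    (∏ i ∈ Finset.range ℓ, qint (2*(k:ℤ) + 2*(a:ℤ) - 2*(i:ℤ)) * qint (2*(k:ℤ) - 2*(i:ℤ)))

lemma g_zero (ς : Kq) (k a : ℕ) : g ς k a 0 = 1 := by simp [g]

lemma g_succ (ς : Kq) (k a ℓ : ℕ) :
    g ς k a (ℓ+1) = g ς k a ℓ * ((qq * ς) *
      (qint (2*(a:ℤ)-2*ℓ) * qint (2*(k:ℤ)+2*(a:ℤ)-2*ℓ) * qint (2*(k:ℤ)-2*ℓ) / qint (2*(ℓ:ℤ)+2))) := by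
  unfold g
  rw [Finset.prod_range_succ, Finset.prod_range_succ, pow_succ]
  ring

lemma g_succ_succ (ς : Kq) (k a ℓ : ℕ) :
    g ς (k+1) a (ℓ+1) = g ς k a ℓ * ((qq * ς) *
      (qint (2*(a:ℤ)-2*ℓ) * qint (2*(k:ℤ)+2*(a:ℤ)+2) * qint (2*(k:ℤ)+2) / qint (2*(ℓ:ℤ)+2))) := by
  unfold g
  rw [Finset.prod_range_succ]
  rw [Finset.prod_range_succ']
  have h1 : ∀ i ∈ Finset.range ℓ,
      qint (2*(((k+1:ℕ)):ℤ) + 2*(a:ℤ) - 2*(((i+1:ℕ)):ℤ)) * qint (2*(((k+1:ℕ)):ℤ) - 2*(((i+1:ℕ)):ℤ)) =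
      qint (2*(k:ℤ) + 2*(a:ℤ) - 2*(i:ℤ)) * qint (2*(k:ℤ) - 2*(i:ℤ)) := by
    intro i _
    congr 2 <;> push_cast <;> ring
  rw [Finset.prod_congr rfl h1]
  have h2 : qint (2*(((k+1:ℕ)):ℤ) + 2*(a:ℤ) - 2*(((0:ℕ)):ℤ)) = qint (2*(k:ℤ)+2*(a:ℤ)+2) := by
    congr 1 <;> push_cast <;> ring
  have h3 : qint (2*(((k+1:ℕ)):ℤ) - 2*(((0:ℕ)):ℤ)) = qint (2*(k:ℤ)+2) := by
    congr 1 <;> push_cast <;> ring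
  rw [h2, h3, pow_succ]
  ring

lemma qint_star (K A L : ℤ) :
    qint (2*A-2*L) * qint (2*K+2*A+2) * qint (2*K+2) =
      qint (2*A-2*L) * (qint (2*K+2*A-2*L) * qint (2*K-2*L)) +
        qint (2*L+2) * (qint (2*K+2*A-2*L+1)^2 - qint (2*K+1)^2) := by
  have h1 := qint_key (2*K+2*A+2) (2*K+2) (2*L+2)
  have h2 := qint_key (2*K+2*A-2*L+1) (2*K+2*A-2*L+1) (2*A-2*L)
  have e1 : (2*K+2*A+2) - (2*L+2) = 2*K+2*A-2*L := by ring
  have e2 : (2*K+2) - (2*L+2) = 2*K-2*L := by ring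
  have e3 : (2*K+2*A+2) + (2*K+2) - (2*L+2) = 4*K+2*A-2*L+2 := by ring
  have e4 : (2*K+2*A-2*L+1) - (2*A-2*L) = 2*K+1 := by ring
  have e5 : (2*K+2*A-2*L+1) + (2*K+2*A-2*L+1) - (2*A-2*L) = 4*K+2*A-2*L+2 := by ring
  rw [e1, e2, e3] at h1
  rw [e4, e5] at h2
  linear_combination qint (2*A-2*L) * h1 - qint (2*L+2) * h2

lemma g_rec (ς : Kq) (k a ℓ : ℕ) :
    g ς (k+1) a (ℓ+1) = g ς k a (ℓ+1) +
      g ς k a ℓ * (qq * ς * (qint (2*(k:ℤ)+2*(a:ℤ)-2*(ℓ:ℤ)+1))^2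
        - qq * ς * (qint (2*(k:ℤ)+1))^2) := by
  rw [g_succ_succ, g_succ]
  have hstar := qint_star (k:ℤ) (a:ℤ) (ℓ:ℤ)
  have he : qint (2*(ℓ:ℤ)+2) ≠ 0 := qint_ne_zero (by omega)
  field_simp
  linear_combination (g ς k a ℓ * (qq * ς)) * hstar

lemma g_top (ς : Kq) (k a : ℕ) : g ς k a (k+1) = 0 := by
  have hz : (∏ i ∈ Finset.range (k+1),
      qint (2*(k:ℤ)+2*(a:ℤ)-2*(i:ℤ)) * qint (2*(k:ℤ)-2*(i:ℤ))) = 0 :=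
    Finset.prod_eq_zero (Finset.self_mem_range_succ k)
      (by rw [show (2*(k:ℤ)-2*(k:ℤ)) = 0 by ring, qint_zero, mul_zero])
  unfold g
  rw [hz, mul_zero]

lemma Fp_succ (ς : Kq) (n : ℕ) :
    Fp ς (n+1) = Fp ς n *
      ((Polynomial.X : Polynomial Kq) ^ 2 - Polynomial.C (qq * ς * (qint (2*(n:ℤ)+1))^2)) := by
  unfold Fp
  rw [Finset.prod_range_succ]

lemma Fp_step (ς : Kq) (n m : ℕ) :
    Fp ς n * ((Polynomial.X : Polynomial Kq) ^ 2 - Polynomial.C (qq * ς * (qint (2*(m:ℤ)+1))^2)) =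
      Fp ς (n+1) + Polynomial.C (qq * ς * (qint (2*(n:ℤ)+1))^2
        - qq * ς * (qint (2*(m:ℤ)+1))^2) * Fp ς n := by
  rw [Fp_succ, map_sub]
  ring

lemma key (ς : Kq) (k a : ℕ) :
    Fp ς k * Fp ς a =
      ∑ ℓ ∈ Finset.range (k+1), Polynomial.C (g ς k a ℓ) * Fp ς (k + a - ℓ) := by
  induction k with
  | zero => simp [Fp, g_zero]
  | succ k ih =>
    rw [Fp_succ, mul_right_comm, ih, Finset.sum_mul]
    have hterm : ∀ ℓ ∈ Finset.range (k+1),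
        Polynomial.C (g ς k a ℓ) * Fp ς (k + a - ℓ) *
          ((Polynomial.X : Polynomial Kq) ^ 2 - Polynomial.C (qq * ς * (qint (2*(k:ℤ)+1))^2)) =
        Polynomial.C (g ς k a ℓ) * Fp ς (k + 1 + a - ℓ) +
          Polynomial.C (g ς k a ℓ * (qq * ς * (qint (2*(k:ℤ)+2*(a:ℤ)-2*(ℓ:ℤ)+1))^2
            - qq * ς * (qint (2*(k:ℤ)+1))^2)) * Fp ς (k + a - ℓ) := by
      intro ℓ hℓ
      have hℓk : ℓ ≤ k := by simpa [Nat.lt_succ_iff] using hℓ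
      rw [mul_assoc, Fp_step ς (k+a-ℓ) k]
      have e1 : k + a - ℓ + 1 = k + 1 + a - ℓ := by omega
      have e2 : (2*((k+a-ℓ:ℕ)):ℤ)+1 = 2*(k:ℤ)+2*(a:ℤ)-2*(ℓ:ℤ)+1 := by
        omega
      rw [e1, e2, map_mul]
      ring
    rw [Finset.sum_congr rfl hterm, Finset.sum_add_distrib]
    -- now handle RHS
    rw [Finset.sum_range_succ' (fun ℓ => Polynomial.C (g ς (k+1) a ℓ) * Fp ς (k + 1 + a - ℓ)) (k+1)]
    have hsplit : ∀ i ∈ Finset.range (k+1),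
        Polynomial.C (g ς (k+1) a (i+1)) * Fp ς (k + 1 + a - (i+1)) =
        Polynomial.C (g ς k a (i+1)) * Fp ς (k + a - i) +
          Polynomial.C (g ς k a i * (qq * ς * (qint (2*(k:ℤ)+2*(a:ℤ)-2*(i:ℤ)+1))^2
            - qq * ς * (qint (2*(k:ℤ)+1))^2)) * Fp ς (k + a - i) := by
      intro i hi
      have e1 : k + 1 + a - (i+1) = k + a - i := by omega
      rw [e1, g_rec, map_add, map_mul, add_mul]
    rw [Finset.sum_congr rfl hsplit, Finset.sum_add_distrib]
    have hS1 : ∑ ℓ ∈ Finset.range (k+1), Polynomial.C (g ς k a ℓ) * Fp ς (k + 1 + a - ℓ) =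
        (∑ i ∈ Finset.range (k+1), Polynomial.C (g ς k a (i+1)) * Fp ς (k + a - i)) +
          Polynomial.C (g ς (k+1) a 0) * Fp ς (k + 1 + a - 0) := by
      rw [Finset.sum_range_succ' (fun ℓ => Polynomial.C (g ς k a ℓ) * Fp ς (k + 1 + a - ℓ)) k]
      rw [Finset.sum_range_succ]
      have e0 : ∀ i, k + 1 + a - (i+1) = k + a - i := by intro i; omega
      simp only [e0, g_top, map_zero, zero_mul, add_zero, Nat.sub_zero, g_zero]
    rw [hS1]
    ring

lemma qfact_ratio (n ℓ : ℕ) (h : ℓ ≤ n) :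
    qfact (2*n+1) = qfact (2*(n-ℓ)+1) *
      ∏ i ∈ Finset.range ℓ, (qint (2*(n:ℤ)-2*(i:ℤ)) * qint (2*(n:ℤ)-2*(i:ℤ)+1)) := by
  induction ℓ with
  | zero => simp
  | succ ℓ ih =>
    rw [ih (by omega), Finset.prod_range_succ]
    have hj : n - ℓ = (n - (ℓ+1)) + 1 := by omega
    rw [hj]
    have e : 2*((n-(ℓ+1))+1)+1 = (2*(n-(ℓ+1))+1) + 1 + 1 := by ring
    rw [e, qfact_succ, qfact_succ]
    have e1 : ((2*(n-(ℓ+1))+1 : ℕ):ℤ)+1 = 2*(n:ℤ)-2*(ℓ:ℤ) := by omega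
    have e2 : ((2*(n-(ℓ+1))+1+1 : ℕ):ℤ)+1 = 2*(n:ℤ)-2*(ℓ:ℤ)+1 := by omega
    rw [e1, e2]
    ring

lemma coeff_eq (ς : Kq) (k a ℓ : ℕ) (h : ℓ ≤ k) :
    qbinom (2*k+2*a+1) (2*k+1) *
      ((∏ m ∈ Finset.Icc 1 ℓ, (qint (2*(a:ℤ)-2*(m:ℤ)+2) * qint (2*(k:ℤ)-2*(m:ℤ)+2)) /
          (qint (2*(k:ℤ)+2*(a:ℤ)-2*(m:ℤ)+3) * qint (2*(m:ℤ)))) * (qq*ς)^ℓ) *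
      (qfact (2*(k+a-ℓ)+1))⁻¹ =
    g ς k a ℓ * (qfact (2*k+1))⁻¹ * (qfact (2*a))⁻¹ := by
  have hIcc : (∏ m ∈ Finset.Icc 1 ℓ, (qint (2*(a:ℤ)-2*(m:ℤ)+2) * qint (2*(k:ℤ)-2*(m:ℤ)+2)) /
      (qint (2*(k:ℤ)+2*(a:ℤ)-2*(m:ℤ)+3) * qint (2*(m:ℤ)))) =
      (∏ i ∈ Finset.range ℓ, (qint (2*(a:ℤ)-2*(i:ℤ)) * qint (2*(k:ℤ)-2*(i:ℤ))) /
        (qint (2*(k:ℤ)+2*(a:ℤ)-2*(i:ℤ)+1) * qint (2*(i:ℤ)+2))) := by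
    rw [← Finset.Ico_add_one_right_eq_Icc, Finset.prod_Ico_eq_prod_range]
    apply Finset.prod_congr rfl
    intro i _
    congr 1
    · congr 1 <;> congr 1 <;> push_cast <;> ring
    · congr 1 <;> congr 1 <;> push_cast <;> ring
  have hfr := qfact_ratio (k+a) ℓ (by omega)
  have hfr2 : qfact (2*k+2*a+1) = qfact (2*(k+a-ℓ)+1) *
      ∏ i ∈ Finset.range ℓ, (qint (2*(k:ℤ)+2*(a:ℤ)-2*(i:ℤ)) * qint (2*(k:ℤ)+2*(a:ℤ)-2*(i:ℤ)+1)) := by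
    rw [show 2*k+2*a+1 = 2*(k+a)+1 by ring, hfr]
    congr 1
    apply Finset.prod_congr rfl
    intro i _
    congr 1 <;> congr 1 <;> push_cast <;> ring
  unfold qbinom
  rw [show 2*k+2*a+1 - (2*k+1) = 2*a by omega, hfr2, hIcc]
  unfold g
  rw [Finset.prod_div_distrib, Finset.prod_div_distrib, Finset.prod_mul_distrib,
    Finset.prod_mul_distrib, Finset.prod_mul_distrib, Finset.prod_mul_distrib]
  have h1 : qfact (2*k+1) ≠ 0 := qfact_ne_zero _
  have h2 : qfact (2*a) ≠ 0 := qfact_ne_zero _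
  have h3 : qfact (2*(k+a-ℓ)+1) ≠ 0 := qfact_ne_zero _
  have h4 : (∏ i ∈ Finset.range ℓ, qint (2*(i:ℤ)+2)) ≠ 0 := by
    apply Finset.prod_ne_zero_iff.mpr
    intro i _
    exact qint_ne_zero (by omega)
  have h5 : (∏ i ∈ Finset.range ℓ, qint (2*(k:ℤ)+2*(a:ℤ)-2*(i:ℤ)+1)) ≠ 0 := by
    apply Finset.prod_ne_zero_iff.mpr
    intro i hi
    have : i < ℓ := Finset.mem_range.mp hi
    exact qint_ne_zero (by omega)
  set A1 := ∏ i ∈ Finset.range ℓ, qint (2*(a:ℤ)-2*(i:ℤ)) with hA1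
  set A2 := ∏ i ∈ Finset.range ℓ, qint (2*(i:ℤ)+2) with hA2
  set A3 := ∏ i ∈ Finset.range ℓ, qint (2*(k:ℤ)+2*(a:ℤ)-2*(i:ℤ)) with hA3
  set A4 := ∏ i ∈ Finset.range ℓ, qint (2*(k:ℤ)-2*(i:ℤ)) with hA4
  set A5 := ∏ i ∈ Finset.range ℓ, qint (2*(k:ℤ)+2*(a:ℤ)-2*(i:ℤ)+1) with hA5
  field_simp


lemma BoddP_odd (ς : Kq) (n : ℕ) :
    BoddP ς (2*n+1) = Polynomial.C (qfact (2*n+1))⁻¹ * (Polynomial.X * Fp ς n) := by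
  unfold BoddP Fp
  rw [if_neg (by rw [Nat.even_iff]; omega)]
  rw [show (2*n+1)/2 = n by omega]

lemma BoddP_even (ς : Kq) (n : ℕ) :
    BoddP ς (2*n) = Polynomial.C (qfact (2*n))⁻¹ * Fp ς n := by
  unfold BoddP Fp
  rw [if_pos (by rw [Nat.even_iff]; omega)]
  rw [show (2*n)/2 = n by omega]

lemma sum_shift {M : Type*} [AddCommMonoid M] (f : ℕ → M) (k : ℕ) :
    ∑ ℓ ∈ Finset.range (k+1), f ℓ = f 0 + ∑ ℓ ∈ Finset.Icc 1 k, f ℓ := by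
  induction k with
  | zero => simp
  | succ k ih =>
    rw [Finset.sum_range_succ, ih, Finset.sum_Icc_succ_top (by omega), add_assoc]


/-- Multiplication formula `B_odd^{(2k+1)} B_odd^{(2a)}`. -/
theorem Bodd_mul_odd_even (ς : Kq) (hς : ς ≠ 0) (k a : ℕ) :
    BoddP ς (2 * k + 1) * BoddP ς (2 * a) =
    Polynomial.C (qbinom (2 * k + 2 * a + 1) (2 * k + 1)) *
      (BoddP ς (2 * k + 2 * a + 1) +
        ∑ ℓ ∈ Finset.Icc 1 k,
          Polynomial.C ((∏ m ∈ Finset.Icc 1 ℓ,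
              (qint (2 * (a : ℤ) - 2 * (m : ℤ) + 2) * qint (2 * (k : ℤ) - 2 * (m : ℤ) + 2)) /
                (qint (2 * (k : ℤ) + 2 * (a : ℤ) - 2 * (m : ℤ) + 3) * qint (2 * (m : ℤ)))) *
            (qq * ς) ^ ℓ) *
          BoddP ς (2 * k + 2 * a - 2 * ℓ + 1)) := by
  
  have e0 : BoddP ς (2*k+2*a+1) =
      Polynomial.C (qfact (2*(k+a)+1))⁻¹ * (Polynomial.X * Fp ς (k+a)) := by
    rw [show 2*k+2*a+1 = 2*(k+a)+1 by ring]
    exact BoddP_odd ς (k+a)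
  rw [BoddP_odd ς k, BoddP_even ς a, e0]
  have esum : ∀ ℓ ∈ Finset.Icc 1 k,
      Polynomial.C ((∏ m ∈ Finset.Icc 1 ℓ,
          (qint (2 * (a : ℤ) - 2 * (m : ℤ) + 2) * qint (2 * (k : ℤ) - 2 * (m : ℤ) + 2)) /
            (qint (2 * (k : ℤ) + 2 * (a : ℤ) - 2 * (m : ℤ) + 3) * qint (2 * (m : ℤ)))) *
        (qq * ς) ^ ℓ) * BoddP ς (2 * k + 2 * a - 2 * ℓ + 1) =
      Polynomial.C ((∏ m ∈ Finset.Icc 1 ℓ,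
          (qint (2 * (a : ℤ) - 2 * (m : ℤ) + 2) * qint (2 * (k : ℤ) - 2 * (m : ℤ) + 2)) /
            (qint (2 * (k : ℤ) + 2 * (a : ℤ) - 2 * (m : ℤ) + 3) * qint (2 * (m : ℤ)))) *
        (qq * ς) ^ ℓ) *
        (Polynomial.C (qfact (2*(k+a-ℓ)+1))⁻¹ * (Polynomial.X * Fp ς (k+a-ℓ))) := by
    intro ℓ hℓ
    have hℓ1 := Finset.mem_Icc.mp hℓ
    rw [show 2*k+2*a-2*ℓ+1 = 2*(k+a-ℓ)+1 by omega, BoddP_odd]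
  rw [Finset.sum_congr rfl esum]
  rw [show Polynomial.C (qfact (2*k+1))⁻¹ * (Polynomial.X * Fp ς k) *
      (Polynomial.C (qfact (2*a))⁻¹ * Fp ς a) =
      Polynomial.C ((qfact (2*k+1))⁻¹ * (qfact (2*a))⁻¹) *
        (Polynomial.X * (Fp ς k * Fp ς a)) by rw [map_mul]; ring]
  rw [key ς k a, Finset.mul_sum, Finset.mul_sum]
  rw [sum_shift (fun ℓ => Polynomial.C ((qfact (2*k+1))⁻¹ * (qfact (2*a))⁻¹) *
      (Polynomial.X * (Polynomial.C (g ς k a ℓ) * Fp ς (k+a-ℓ)))) k]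
  rw [mul_add, Finset.mul_sum]
  congr 1
  · -- ℓ = 0 term
    have h0 := coeff_eq ς k a 0 (by omega)
    rw [show Finset.Icc 1 0 = ∅ from rfl, Finset.prod_empty, g_zero, pow_zero,
      Nat.sub_zero] at h0
    beta_reduce
    rw [g_zero, Nat.sub_zero, map_one, one_mul]
    rw [show ((qfact (2*k+1))⁻¹ * (qfact (2*a))⁻¹ : Kq) =
      1 * (qfact (2*k+1))⁻¹ * (qfact (2*a))⁻¹ by ring, ← h0]
    simp only [map_mul, map_one, mul_one, one_mul]
    ring
  · apply Finset.sum_congr rfl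
    intro ℓ hℓ
    have hℓ1 := Finset.mem_Icc.mp hℓ
    have hc := coeff_eq ς k a ℓ (by omega)
    calc Polynomial.C ((qfact (2*k+1))⁻¹ * (qfact (2*a))⁻¹) *
          (Polynomial.X * (Polynomial.C (g ς k a ℓ) * Fp ς (k+a-ℓ)))
        = Polynomial.C (g ς k a ℓ * (qfact (2*k+1))⁻¹ * (qfact (2*a))⁻¹) *
            (Polynomial.X * Fp ς (k+a-ℓ)) := by
          rw [map_mul, map_mul, map_mul]; ring
      _ = Polynomial.C (qbinom (2*k+2*a+1) (2*k+1) *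
            ((∏ m ∈ Finset.Icc 1 ℓ,
              (qint (2*(a:ℤ)-2*(m:ℤ)+2) * qint (2*(k:ℤ)-2*(m:ℤ)+2)) /
                (qint (2*(k:ℤ)+2*(a:ℤ)-2*(m:ℤ)+3) * qint (2*(m:ℤ)))) * (qq*ς)^ℓ) *
            (qfact (2*(k+a-ℓ)+1))⁻¹) * (Polynomial.X * Fp ς (k+a-ℓ)) := by
          rw [← hc]
      _ = _ := by
          rw [map_mul, map_mul]; ring
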